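/- Let H₁ ≤ S_e, H₂ ≤ S_d be transitive and G = H₁ ≀ H₂. If g = ((h_{1,1},…,h_{1,d}),1) ∈ G has exactly one nontrivial base coordinate h_{1,1} = h with ind(h) = ind(H₁) minimal, then ind(g) = ind(H₁); conversely every element of G of minimal index ind(G) is conjugate in G to an element of this form. -/

import Mathlib

/-- Number of orbits of the cyclic group generated by a permutation. -/
noncomputable def orbCount {α : Type*} [Fintype α] (g : Equiv.Perm α) : ℕ :=
  Nat.card (MulAction.orbitRel.Quotient (Subgroup.zpowers g) α)

/-- The index of a permutation: `ind(g) = n - #orbits(⟨g⟩)`. -/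
noncomputable def permInd {α : Type*} [Fintype α] (g : Equiv.Perm α) : ℕ :=
  Fintype.card α - orbCount g

/-- The index of a permutation group: the minimum of `permInd g` over `1 ≠ g ∈ G`. -/
noncomputable def grpInd {α : Type*} [Fintype α] (G : Subgroup (Equiv.Perm α)) : ℕ :=
  sInf {m | ∃ g ∈ G, g ≠ 1 ∧ permInd g = m}

/-- A subgroup of permutations is transitive. -/
def IsTransitive {α : Type*} (G : Subgroup (Equiv.Perm α)) : Prop :=
  ∀ i j : α, ∃ g ∈ G, g i = j

/-- `B` is a block for the permutation group `G`. -/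
def IsBlockOf {α : Type*} (G : Subgroup (Equiv.Perm α)) (B : Set α) : Prop :=
  ∀ g ∈ G, (⇑g '' B = B ∨ Disjoint (⇑g '' B) B)

/-- `G` is a primitive permutation group. -/
def IsPrimitive {α : Type*} (G : Subgroup (Equiv.Perm α)) : Prop :=
  IsTransitive G ∧ ∀ B : Set α, IsBlockOf G B → B.Subsingleton ∨ B = Set.univ

/-- The element of the imprimitive wreath product acting on `Fin d × Fin e` given by
`(i, x) ↦ (h i, f i x)`: the blocks `{i} × Fin e` are permuted by `h` and the `i`-th
base coordinate `f i` acts inside the block. -/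
def wrElem {e d : ℕ} (h : Equiv.Perm (Fin d)) (f : Fin d → Equiv.Perm (Fin e)) :
    Equiv.Perm (Fin d × Fin e) := Equiv.prodShear h f

lemma wrElem_mul {e d : ℕ} (h h' : Equiv.Perm (Fin d)) (f f' : Fin d → Equiv.Perm (Fin e)) :
    wrElem h f * wrElem h' f' = wrElem (h * h') (fun i => f (h' i) * f' i) := by
  ext p <;> simp [wrElem, Equiv.prodShear, Equiv.Perm.mul_apply]

lemma wrElem_one {e d : ℕ} :
    (wrElem (1 : Equiv.Perm (Fin d)) (fun _ => (1 : Equiv.Perm (Fin e)))) = 1 := by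
  ext p <;> simp [wrElem, Equiv.prodShear]

/-- The imprimitive wreath product `H₁ ≀ H₂ = H₁^d ⋊ H₂` as a subgroup of the
permutations of `Fin d × Fin e`. -/
def wreath {e d : ℕ} (H₁ : Subgroup (Equiv.Perm (Fin e))) (H₂ : Subgroup (Equiv.Perm (Fin d))) :
    Subgroup (Equiv.Perm (Fin d × Fin e)) where
  carrier := {g | ∃ h f, h ∈ H₂ ∧ (∀ i, f i ∈ H₁) ∧ g = wrElem h f}
  one_mem' := ⟨1, fun _ => 1, H₂.one_mem, fun _ => H₁.one_mem, wrElem_one.symm⟩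
  mul_mem' := by
    rintro a b ⟨h, f, hh, hf, rfl⟩ ⟨h', f', hh', hf', rfl⟩
    exact ⟨h * h', fun i => f (h' i) * f' i, H₂.mul_mem hh hh',
      fun i => H₁.mul_mem (hf _) (hf' _), wrElem_mul h h' f f'⟩
  inv_mem' := by
    rintro a ⟨h, f, hh, hf, rfl⟩
    refine ⟨h⁻¹, fun j => (f (h⁻¹ j))⁻¹, H₂.inv_mem hh, fun j => H₁.inv_mem (hf _), ?_⟩
    apply inv_eq_of_mul_eq_one_right
    rw [wrElem_mul]
    simp only [mul_inv_cancel]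
    exact wrElem_one

/-!
If the top component `σ` of `g ∈ H₁ ≀ H₂` is nontrivial, every orbit of `⟨g⟩` meets one of the
fibres over a set of representatives of the `⟨σ⟩`-orbits, so `g` has at most `(d - 1) e` orbits
and `ind(g) ≥ e > ind(H₁) ≥ ind(H₁ ≀ H₂)`. If `σ = 1`, the orbits of `g` are those of its base
coordinates, so `ind(g)` is the sum of their indices, each nontrivial coordinate contributing at
least `ind(H₁)`. Hence an element of minimal index has exactly one nontrivial base coordinate,
of index `ind(H₁)`, and no conjugation is needed.
-/

open Equiv Equiv.Perm

abbrev PermOrbits {α : Type*} (g : Perm α) : Type _ :=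
  MulAction.orbitRel.Quotient (Subgroup.zpowers g) α

section Orbits

variable {α : Type*}

theorem PermOrbits.mk_eq_mk_iff {g : Perm α} {x y : α} :
    (Quotient.mk'' x : PermOrbits g) = Quotient.mk'' y ↔ g.SameCycle x y := by
  rw [Quotient.eq'', MulAction.orbitRel_apply, MulAction.mem_orbit_iff, sameCycle_comm]
  constructor
  · rintro ⟨⟨_, k, rfl⟩, h⟩
    exact ⟨k, h⟩
  · rintro ⟨k, h⟩
    exact ⟨⟨g ^ k, k, rfl⟩, h⟩

variable [Fintype α]

theorem orbCount_le_card (g : Perm α) : orbCount g ≤ Fintype.card α :=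
  Nat.card_eq_fintype_card (α := α) ▸ Nat.card_le_card_of_surjective _ Quotient.mk''_surjective

theorem permInd_eq_zero_iff {g : Perm α} : permInd g = 0 ↔ g = 1 := by
  rw [permInd, Nat.sub_eq_zero_iff_le, ← Nat.card_eq_fintype_card]
  constructor
  · intro h
    have hinj := (Quotient.mk''_surjective.bijective_of_nat_card_le h).injective
    ext x
    exact hinj (PermOrbits.mk_eq_mk_iff.2 (sameCycle_apply_left.2 (SameCycle.refl g x)))
  · rintro rfl
    refine Nat.card_le_card_of_injective (Quotient.mk'' : α → PermOrbits 1) fun x y hxy => ?_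
    exact sameCycle_one.1 (PermOrbits.mk_eq_mk_iff.1 hxy)

end Orbits

section ProdShear

variable {α β : Type*}

def prodShearOneHom : (α → Perm β) →* Perm (α × β) where
  toFun := prodShear 1
  map_one' := rfl
  map_mul' _ _ := rfl

theorem prodShear_one_zpow_apply (f : α → Perm β) (k : ℤ) (p : α × β) :
    ((prodShear 1 f : Perm (α × β)) ^ k) p = (p.1, (f p.1 ^ k) p.2) := by
  rw [show prodShear 1 f = prodShearOneHom f from rfl, ← map_zpow]
  rfl

theorem sameCycle_prodShear_one_iff {f : α → Perm β} {p q : α × β} :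
    SameCycle (prodShear 1 f : Perm (α × β)) p q ↔ p.1 = q.1 ∧ (f p.1).SameCycle p.2 q.2 := by
  simp only [SameCycle, prodShear_one_zpow_apply, Prod.ext_iff, exists_and_left]

theorem prodShear_pow_apply_fst (σ : Perm α) (f : α → Perm β) (n : ℕ) (p : α × β) :
    (((prodShear σ f : Perm (α × β)) ^ n) p).1 = (σ ^ n) p.1 := by
  simp only [coe_pow]
  exact (Function.Semiconj.iterate_right (f := Prod.fst) (fun _ => rfl) n) p

noncomputable def prodShearOneOrbitsEquiv (f : α → Perm β) :
    PermOrbits (prodShear 1 f : Perm (α × β)) ≃ Σ a, PermOrbits (f a) where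
  toFun := Quotient.lift (fun p => ⟨p.1, Quotient.mk'' p.2⟩) fun p q hpq => by
    obtain ⟨h₁, h₂⟩ :=
      sameCycle_prodShear_one_iff.1 (PermOrbits.mk_eq_mk_iff.1 (Quotient.sound hpq))
    obtain ⟨a, x⟩ := p
    obtain ⟨b, y⟩ := q
    subst h₁
    simpa using PermOrbits.mk_eq_mk_iff.2 h₂
  invFun x := Quotient.mk'' (x.1, x.2.out)
  left_inv := Quotient.ind fun p => PermOrbits.mk_eq_mk_iff.2 <|
    sameCycle_prodShear_one_iff.2 ⟨rfl, PermOrbits.mk_eq_mk_iff.1 (Quotient.out_eq' _)⟩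
  right_inv x := by
    obtain ⟨a, q⟩ := x
    exact congrArg (Sigma.mk a) (Quotient.out_eq' q)

variable [Fintype α] [Fintype β]

theorem orbCount_prodShear_one (f : α → Perm β) :
    orbCount (prodShear 1 f : Perm (α × β)) = ∑ a, orbCount (f a) := by
  rw [orbCount, Nat.card_congr (prodShearOneOrbitsEquiv f), Nat.card_sigma]
  rfl

theorem permInd_prodShear_one (f : α → Perm β) :
    permInd (prodShear 1 f : Perm (α × β)) = ∑ a, permInd (f a) := by
  rw [permInd, orbCount_prodShear_one, Fintype.card_prod, ← smul_eq_mul,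
    ← Finset.card_univ, ← Finset.sum_const]
  exact (Finset.sum_tsub_distrib _ fun a _ => orbCount_le_card (f a)).symm

theorem permInd_prodShear_one_update [DecidableEq α] (a : α) (h : Perm β) :
    permInd (prodShear 1 (Function.update (fun _ => 1) a h) : Perm (α × β)) = permInd h := by
  rw [permInd_prodShear_one, Finset.sum_eq_single a (fun b _ hb => ?_) (by simp),
    Function.update_self]
  rw [Function.update_of_ne hb, permInd_eq_zero_iff]

theorem orbCount_prodShear_le (σ : Perm α) (f : α → Perm β) :
    orbCount (prodShear σ f : Perm (α × β)) ≤ orbCount σ * Fintype.card β := by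
  rw [orbCount, orbCount, ← Nat.card_eq_fintype_card, ← Nat.card_prod]
  refine Nat.card_le_card_of_surjective
    (fun x : PermOrbits σ × β => (Quotient.mk'' (x.1.out, x.2) : PermOrbits _)) ?_
  refine Quotient.ind fun p => ?_
  set q : PermOrbits σ := Quotient.mk'' p.1
  obtain ⟨n, hn⟩ := (PermOrbits.mk_eq_mk_iff.1 (Quotient.out_eq' q)).symm.exists_nat_pow_eq
  refine ⟨(q, (((prodShear σ f : Perm (α × β)) ^ n) p).2), PermOrbits.mk_eq_mk_iff.2 ?_⟩
  rw [← hn, ← prodShear_pow_apply_fst]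
  exact sameCycle_pow_left.2 (SameCycle.refl _ _)

theorem card_le_permInd_prodShear {σ : Perm α} (hσ : σ ≠ 1) (f : α → Perm β) :
    Fintype.card β ≤ permInd (prodShear σ f : Perm (α × β)) := by
  have horb : orbCount σ + 1 ≤ Fintype.card α := by
    have := permInd_eq_zero_iff.not.2 hσ
    rw [permInd] at this
    have := orbCount_le_card σ
    omega
  rw [permInd, Fintype.card_prod]
  refine Nat.le_sub_of_add_le ?_
  calc Fintype.card β + orbCount (prodShear σ f : Perm (α × β))
      ≤ Fintype.card β + orbCount σ * Fintype.card β := by grw [orbCount_prodShear_le]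
    _ = (orbCount σ + 1) * Fintype.card β := by ring
    _ ≤ Fintype.card α * Fintype.card β := by gcongr

end ProdShear

section GroupIndex

variable {α : Type*} [Fintype α] {G : Subgroup (Perm α)}

theorem grpInd_le_permInd {g : Perm α} (hg : g ∈ G) (hg1 : g ≠ 1) : grpInd G ≤ permInd g :=
  Nat.sInf_le ⟨g, hg, hg1, rfl⟩

theorem exists_permInd_eq_grpInd (hG : G ≠ ⊥) : ∃ g ∈ G, g ≠ 1 ∧ permInd g = grpInd G := by
  obtain ⟨⟨g, hg⟩, hg1⟩ := Subgroup.ne_bot_iff_exists_ne_one.1 hG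
  exact Nat.sInf_mem (s := {m | ∃ g ∈ G, g ≠ 1 ∧ permInd g = m})
    ⟨_, g, hg, fun h => hg1 (Subtype.ext h), rfl⟩

theorem grpInd_lt_card (hG : G ≠ ⊥) : grpInd G < Fintype.card α := by
  obtain ⟨g, -, hg1, hg⟩ := exists_permInd_eq_grpInd hG
  obtain ⟨x, -⟩ := not_forall.1 (mt Equiv.ext hg1)
  have : Nonempty (PermOrbits g) := ⟨Quotient.mk'' x⟩
  have : 0 < orbCount g := Nat.card_pos
  rw [← hg, permInd]
  exact Nat.sub_lt (Fintype.card_pos_iff.2 ⟨x⟩) this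

theorem exists_eq_update_of_sum_permInd_le {ι : Type*} [Fintype ι] [DecidableEq ι]
    {f : ι → Perm α} {m : ℕ} (hf : f ≠ 1) (hlow : ∀ i, f i ≠ 1 → m ≤ permInd (f i))
    (hsum : ∑ i, permInd (f i) ≤ m) :
    ∃ i, f i ≠ 1 ∧ permInd (f i) = m ∧ f = Function.update (fun _ => 1) i (f i) := by
  obtain ⟨i, hi⟩ := Function.ne_iff.1 hf
  have hi_le : permInd (f i) ≤ m :=
    (Finset.single_le_sum (fun _ _ => Nat.zero_le _) (Finset.mem_univ i)).trans hsum
  refine ⟨i, hi, hi_le.antisymm (hlow i hi), funext fun j => ?_⟩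
  rcases eq_or_ne j i with rfl | hj
  · rw [Function.update_self]
  rw [Function.update_of_ne hj]
  by_contra hj1
  have hpair : permInd (f i) + permInd (f j) ≤ m := by
    rw [← Finset.sum_pair (f := fun k => permInd (f k)) hj.symm]
    exact (Finset.sum_le_sum_of_subset (Finset.subset_univ _)).trans hsum
  have := hlow j hj1
  have := permInd_eq_zero_iff.not.2 hi
  omega

end GroupIndex

section Wreath

variable {e d : ℕ} {H₁ : Subgroup (Perm (Fin e))} (H₂ : Subgroup (Perm (Fin d)))

theorem wrElem_update_mem_wreath {h : Perm (Fin e)} (hh : h ∈ H₁) (i : Fin d) :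
    wrElem 1 (Function.update (fun _ => 1) i h) ∈ wreath H₁ H₂ := by
  refine ⟨1, _, H₂.one_mem, fun j => ?_, rfl⟩
  rcases eq_or_ne j i with rfl | hj
  · rwa [Function.update_self]
  · rw [Function.update_of_ne hj]
    exact H₁.one_mem

theorem grpInd_wreath_le (hH₁ : H₁ ≠ ⊥) (i : Fin d) : grpInd (wreath H₁ H₂) ≤ grpInd H₁ := by
  obtain ⟨h, hh, hh1, hind⟩ := exists_permInd_eq_grpInd hH₁
  have hind' : permInd (wrElem 1 (Function.update (fun _ => 1) i h)) = permInd h :=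
    permInd_prodShear_one_update i h
  have hne1 : wrElem 1 (Function.update (fun _ => 1) i h) ≠ 1 := by
    rwa [Ne, ← permInd_eq_zero_iff, hind', permInd_eq_zero_iff]
  calc grpInd (wreath H₁ H₂)
      ≤ permInd (wrElem 1 (Function.update (fun _ => 1) i h)) :=
        grpInd_le_permInd (wrElem_update_mem_wreath H₂ hh i) hne1
    _ = grpInd H₁ := hind'.trans hind

end Wreath

theorem stmt_18_general {e d : ℕ} (H₁ : Subgroup (Equiv.Perm (Fin e)))
    (H₂ : Subgroup (Equiv.Perm (Fin d))) (hne : H₁ ≠ ⊥) :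
    (∀ h : Equiv.Perm (Fin e), h ∈ H₁ → h ≠ 1 → permInd h = grpInd H₁ →
      ∀ i₀ : Fin d, permInd (wrElem 1 (Function.update (fun _ => 1) i₀ h)) = grpInd H₁) ∧
    (∀ g ∈ wreath H₁ H₂, g ≠ 1 → permInd g = grpInd (wreath H₁ H₂) →
      ∃ c ∈ wreath H₁ H₂, ∃ h ∈ H₁, h ≠ 1 ∧ permInd h = grpInd H₁ ∧
        ∃ i₀ : Fin d, c * g * c⁻¹ = wrElem 1 (Function.update (fun _ => 1) i₀ h)) := by
  refine ⟨fun h _ _ hind i₀ => (permInd_prodShear_one_update i₀ h).trans hind, ?_⟩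
  rintro g ⟨σ, f, -, hf, rfl⟩ hg1 hg
  obtain ⟨p, -⟩ := not_forall.1 (mt Equiv.ext hg1)
  have hle : permInd (wrElem σ f) ≤ grpInd H₁ := hg ▸ grpInd_wreath_le H₂ hne p.1
  obtain rfl : σ = 1 := by
    by_contra hσ
    exact (grpInd_lt_card hne).not_ge ((card_le_permInd_prodShear hσ f).trans hle)
  have hf1 : f ≠ 1 := by
    rintro rfl
    exact hg1 wrElem_one
  obtain ⟨i, hi, hind, hfi⟩ := exists_eq_update_of_sum_permInd_le hf1
    (fun i hi => grpInd_le_permInd (hf i) hi) (permInd_prodShear_one f ▸ hle)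
  refine ⟨1, (wreath H₁ H₂).one_mem, f i, hf i, hi, hind, i, ?_⟩
  rw [one_mul, inv_one, mul_one]
  exact congrArg (wrElem 1) hfi

/-- In `G = H₁ ≀ H₂`: an element with trivial top component and exactly one nontrivial base
coordinate `h` of minimal index has index `ind(H₁)`; conversely, every element of `G` of
minimal index `ind(G)` is conjugate in `G` to an element of this form. -/
theorem stmt_18 {e d : ℕ} (hd : 0 < d) (H₁ : Subgroup (Equiv.Perm (Fin e)))
    (H₂ : Subgroup (Equiv.Perm (Fin d)))
    (h1 : IsTransitive H₁) (h2 : IsTransitive H₂) (hne : H₁ ≠ ⊥) :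
    (∀ h : Equiv.Perm (Fin e), h ∈ H₁ → h ≠ 1 → permInd h = grpInd H₁ →
      ∀ i₀ : Fin d, permInd (wrElem 1 (Function.update (fun _ => 1) i₀ h)) = grpInd H₁) ∧
    (∀ g ∈ wreath H₁ H₂, g ≠ 1 → permInd g = grpInd (wreath H₁ H₂) →
      ∃ c ∈ wreath H₁ H₂, ∃ h ∈ H₁, h ≠ 1 ∧ permInd h = grpInd H₁ ∧
        ∃ i₀ : Fin d, c * g * c⁻¹ = wrElem 1 (Function.update (fun _ => 1) i₀ h)) :=
  stmt_18_general H₁ H₂ hne
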